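/- arXiv:2605.28682 — 5 statements merged into one kernel-verified Lean document; each statement's English description precedes it below -/
import Mathlib

section
/- Let Q be a finite acyclic quiver and ZQ its repetition quiver. For each vertex x of ZQ, let h_x be the hammock function (the unique quasi-additive function with h_x(y) = dim Hom(x,y) on the section through x and with defect δ_x). Then the functions h_x, for x ranging over the vertices of ZQ, are linearly independent over the integers. -/
/-!
Statement 0. Q is a finite acyclic quiver without multiple edges; its repetition
quiver ZQ is modelled abstractly by a vertex type `V` with translation `τ : V ≃ V`
and `succ x` the (finite) set of targets of arrows with source `x`.
The defect of `f : V → ℤ` is `f̃(x) = f(x) + f(τ⁻¹x) − Σ_{x→y} f(y)`; `f` is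
quasi-additive if the defect has finite support.  The hammock function `h x` at a
vertex `x` is the unique quasi-additive function with prescribed values on the
section through `x` and with defect `δ_x = Pi.single x 1`; in particular the
family `h` satisfies `defect (h x) = Pi.single x 1`.  The theorem: the hammock
functions `h x`, `x ∈ (ZQ)_0`, are linearly independent over `ℤ`.
-/

/-- The defect `f̃(x) = f(x) + f(τ⁻¹ x) − Σ_{x→y} f(y)` of an integer-valued
function on the repetition quiver. -/
def defect {V : Type} (τ : V ≃ V) (succ : V → Finset V) (f : V → ℤ) (x : V) : ℤ :=
  f x + f (τ.symm x) - ∑ y ∈ succ x, f y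

/-- `defect` as a linear map. -/
def defectₗ {V : Type} (τ : V ≃ V) (succ : V → Finset V) :
    (V → ℤ) →ₗ[ℤ] (V → ℤ) where
  toFun := defect τ succ
  map_add' f g := by
    funext x
    simp [defect, Finset.sum_add_distrib]
    ring
  map_smul' c f := by
    funext x
    simp [defect, ← Finset.mul_sum]
    ring

theorem singles_linearIndependent {V : Type} [DecidableEq V] :
    LinearIndependent ℤ (fun x : V => Pi.single x (1 : ℤ)) := by
  rw [linearIndependent_iff']
  intro s g hsum i hi
  have := congrFun hsum i
  simpa [Finset.sum_apply, Pi.single_apply, Finset.sum_ite_eq', hi] using this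

theorem hammock_functions_linearly_independent
    {V : Type} [DecidableEq V] (τ : V ≃ V) (succ : V → Finset V)
    (Sec : V → Set V)                 -- the section of Q through a given vertex
    (homDim : V → V → ℕ)              -- dim Hom_{D^b(mod kQ)}(x, y)
    (h : V → V → ℤ)                   -- the hammock functions h_x
    -- h_x takes the values dim Hom(x, −) on the section through x
    (hsec : ∀ x y, y ∈ Sec x → h x y = (homDim x y : ℤ))
    -- the defect of h_x is the indicator function δ_x (quasi-additivity included)
    (hdef : ∀ x, defect τ succ (h x) = Pi.single x 1) :
    LinearIndependent ℤ h := by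
  apply LinearIndependent.of_comp (defectₗ τ succ)
  have : (defectₗ τ succ) ∘ h = fun x => Pi.single x (1 : ℤ) := funext fun x => hdef x
  rw [this]
  exact singles_linearIndependent
end

section
/- With the notation of the exceptional sequence construction: for all 1 ≤ t ≤ s ≤ r, the Euler form satisfies ⟨β_t, β_s⟩ = 1. In particular ⟨β_t, β_t⟩ = 1 for each t. -/
open Finset

/-!
Statement 6.  Same setting: `E^(0)` a complete exceptional sequence of
indecomposable projectives ending with `P_i` at a source `i`; `k 1 > … > k r`
the indices of the projectives at the neighbours of `i`;
`β_t := dim P_i − Σ_{1≤t'≤t} dim x_{k_{t'}}^{(0)} = α_i + Σ_{t'>t} dim x_{k_{t'}}^{(0)}`.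
Theorem: `⟨β_t, β_s⟩ = 1` for all `1 ≤ t ≤ s ≤ r` (in particular
`⟨β_t, β_t⟩ = 1`, the case `s = t`).
-/

theorem euler_form_beta_pairing_one
    {I : Type} [Fintype I] [DecidableEq I]
    (e : (I → ℤ) →ₗ[ℤ] (I → ℤ) →ₗ[ℤ] ℤ)          -- the Euler form of Q
    (n r : ℕ) (i : I)
    (X : ℕ → I → ℤ)                               -- dim vectors of E^(0) (positions 1..n)
    (k : ℕ → ℕ)                                    -- indices k_1 > ... > k_r
    (hk_range : ∀ t, 1 ≤ t → t ≤ r → 1 ≤ k t ∧ k t < n)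
    (hk_mono : ∀ t t', 1 ≤ t → t < t' → t' ≤ r → k t' < k t)
    -- E^(0) is a complete exceptional sequence
    (hexc : ∀ u v, 1 ≤ v → v < u → u ≤ n → e (X u) (X v) = 0)
    (hend : ∀ u, 1 ≤ u → u ≤ n → e (X u) (X u) = 1)
    -- the x_l are projective: Euler form against nonnegative vectors is ≥ 0
    (hproj : ∀ l, 1 ≤ l → l ≤ n → ∀ w : I → ℤ, (∀ j, 0 ≤ w j) → 0 ≤ e (X l) w)
    -- ⟨P_i, x_l⟩ = ⟨x_{k_s}, x_l⟩ for l < k_s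
    (hPi : ∀ s l, 1 ≤ s → s ≤ r → 1 ≤ l → l < k s → e (X n) (X l) = e (X (k s)) (X l))
    -- i is a source: β_t = α_i + Σ_{t'>t} dim x_{k_{t'}}
    (hsource : ∀ t, t ≤ r →
        X n - ∑ t' ∈ Icc 1 t, X (k t')
          = Pi.single i 1 + ∑ t' ∈ Icc (t+1) r, X (k t'))
    -- ⟨x_l, S_i⟩ = 0 for l < n
    (hSi : ∀ l, 1 ≤ l → l < n → e (X l) (Pi.single i 1) = 0)
    (t s : ℕ) (ht1 : 1 ≤ t) (hts : t ≤ s) (hsr : s ≤ r) :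
    e (X n - ∑ t' ∈ Icc 1 t, X (k t')) (X n - ∑ t' ∈ Icc 1 s, X (k t')) = 1 := by
  have htr : t ≤ r := hts.trans hsr
  have hkt := hk_range t ht1 htr
  have hn1 : 1 ≤ n := le_of_lt (lt_of_le_of_lt hkt.1 hkt.2)
  have hβs := hsource s hsr
  set B : I → ℤ := X n - ∑ s' ∈ Icc 1 s, X (k s') with hB
  clear_value B
  -- each ⟨x_{k_{t'}}, β_s⟩ = 0 for t' ≤ t
  have key : ∀ t' ∈ Icc 1 t, e (X (k t')) B = 0 := by
    intro t' ht'
    simp only [mem_Icc] at ht'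
    obtain ⟨h1, h2⟩ := ht'
    have hkr := hk_range t' h1 (h2.trans htr)
    rw [hβs, map_add, hSi (k t') hkr.1 hkr.2, map_sum, zero_add]
    apply Finset.sum_eq_zero
    intro s' hs'
    simp only [mem_Icc] at hs'
    have hts' : t' < s' := lt_of_le_of_lt (h2.trans hts) (Nat.lt_of_succ_le hs'.1)
    have hks' := hk_range s' (le_trans h1 (le_of_lt hts')) hs'.2
    exact hexc (k t') (k s') hks'.1 (hk_mono t' s' h1 hts' hs'.2) (le_of_lt hkr.2)
  -- ⟨P_i, β_s⟩ = 1
  have hXnB : e (X n) B = 1 := by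
    rw [hB, map_sub, hend n hn1 le_rfl, map_sum]
    have : ∀ s' ∈ Icc 1 s, e (X n) (X (k s')) = 0 := by
      intro s' hs'
      simp only [mem_Icc] at hs'
      have hks' := hk_range s' hs'.1 (hs'.2.trans hsr)
      exact hexc n (k s') hks'.1 hks'.2 le_rfl
    rw [Finset.sum_eq_zero this]
    ring
  rw [map_sub, map_sum, LinearMap.sub_apply, LinearMap.sum_apply,
    hXnB, Finset.sum_eq_zero key]
  ring
end

section
/- Let C_• be a left 𝒞-exact complex and D_• a left 𝒞-almost split complex in an additive k-linear subcategory 𝒞, and u_• : C_• → D_• a chain map such that u_0 does not factor through d_0^C. Then the mapping cone of the shifted map u_•[−1] is left 𝒞-exact. -/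
open CategoryTheory CategoryTheory.Limits

/-!
Statement 15 (Lemma "mapping cone").  `𝒞` is a `k`-linear (sub)category with
binary biproducts; complexes `0 → C_0 → C_1 → ⋯` are modelled as `ℕ`-indexed
sequences with differentials.  Left `𝒞`-exact: every `d_n` (`n > 0`) is a weak
cokernel of `d_{n−1}`.  Left `𝒞`-almost split: left `𝒞`-exact, nonsplit, `D_0`
indecomposable, and every morphism with domain `D_0` that is not a split
monomorphism factors through `d_0^D`.  The mapping cone of `u_•[−1]` has
degree-`n` object `C_n ⊕ D_{n−1}` (so `C_0` in degree 0, as `D_{−1} = 0`) and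
differential given by the matrix `((d_n^C, 0), (u_n, −d_{n−1}^D))`.
Theorem: if `u_0` does not factor through `d_0^C`, the cone is left `𝒞`-exact.
-/

/-- `g` is a weak cokernel of `f`. -/
def IsWeakCokernel {𝒞 : Type*} [Category 𝒞] [Limits.HasZeroMorphisms 𝒞]
    {X Y Z : 𝒞} (f : X ⟶ Y) (g : Y ⟶ Z) : Prop :=
  f ≫ g = 0 ∧ ∀ (W : 𝒞) (h : Y ⟶ W), f ≫ h = 0 → ∃ k : Z ⟶ W, h = g ≫ k

/-- Degree-`n` object of the mapping cone of `u_•[−1]`: `C_n ⊕ D_{n−1}`. -/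
noncomputable def coneObj {𝒞 : Type*} [Category 𝒞] [Preadditive 𝒞] [HasBinaryBiproducts 𝒞]
    (Cc Dd : ℕ → 𝒞) : ℕ → 𝒞
  | 0 => Cc 0
  | n + 1 => Cc (n + 1) ⊞ Dd n

/-- Differential of the mapping cone of `u_•[−1]`, given by the matrix
`((d_n^C, 0), (u_n, −d_{n−1}^D))`. -/
noncomputable def coneD {𝒞 : Type*} [Category 𝒞] [Preadditive 𝒞] [HasBinaryBiproducts 𝒞]
    (Cc Dd : ℕ → 𝒞)
    (dC : ∀ n, Cc n ⟶ Cc (n + 1)) (dD : ∀ n, Dd n ⟶ Dd (n + 1))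
    (u : ∀ n, Cc n ⟶ Dd n) :
    ∀ n, coneObj Cc Dd n ⟶ coneObj Cc Dd (n + 1)
  | 0 => biprod.lift (dC 0) (u 0)
  | n + 1 => biprod.desc (biprod.lift (dC (n + 1)) (u (n + 1)))
      (biprod.lift 0 (-(dD n)))

/-!
A test morphism `h = (h₁, h₂) : C_{n+1} ⊕ D_n ⟶ W` killed by the cone differential satisfies
`d^C_n h₁ + u_n h₂ = 0`, and its component `h₂` factors as `d^D_n g`: for `n > 0` because
`h₂` kills `d^D_{n-1}`, and for `n = 0` because `h₂` cannot be a split mono (a retraction `r`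
would give `u_0 = d^C_0 (-h₁ r)`), so `D_0` being almost split applies. Then
`h₁ + u_{n+1} g` kills `d^C_n` and factors through `d^C_{n+1}` by exactness of `C_•`, which
yields the factorization of `h` through the next cone differential.
-/

section MappingCone

variable {𝒞 : Type*} [Category 𝒞] [Preadditive 𝒞] [HasBinaryBiproducts 𝒞]
  {Cc Dd : ℕ → 𝒞} {dC : ∀ n, Cc n ⟶ Cc (n + 1)} {dD : ∀ n, Dd n ⟶ Dd (n + 1)}
  {u : ∀ n, Cc n ⟶ Dd n}

theorem biprod_lift_comp_eq {X Y Z W : 𝒞} (f : X ⟶ Y) (g : X ⟶ Z) (h : Y ⊞ Z ⟶ W) :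
    biprod.lift f g ≫ h = f ≫ biprod.inl ≫ h + g ≫ biprod.inr ≫ h := by
  simp [biprod.lift_eq]

omit [HasBinaryBiproducts 𝒞] in
theorem not_isSplitMono_of_not_factors {X Y Z W : 𝒞} {f : X ⟶ Y} {v : X ⟶ Z}
    (hv : ¬ ∃ g : Y ⟶ Z, v = f ≫ g) {h₁ : Y ⟶ W} {h₂ : Z ⟶ W}
    (hh : f ≫ h₁ + v ≫ h₂ = 0) :
    ¬ ∃ r : W ⟶ Z, h₂ ≫ r = 𝟙 Z := by
  rintro ⟨r, hr⟩
  have hv₂ : v ≫ h₂ = -(f ≫ h₁) := eq_neg_of_add_eq_zero_right hh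
  exact hv ⟨-(h₁ ≫ r), by
    rw [← Category.comp_id v, ← hr, ← Category.assoc, hv₂]
    simp⟩

theorem exists_eq_coneD_succ_comp {n : ℕ} (hC : IsWeakCokernel (dC n) (dC (n + 1)))
    (hu : u n ≫ dD n = dC n ≫ u (n + 1)) {W : 𝒞} (h : Cc (n + 1) ⊞ Dd n ⟶ W)
    (hh : dC n ≫ biprod.inl ≫ h + u n ≫ biprod.inr ≫ h = 0)
    (hfac : ∃ g, biprod.inr ≫ h = dD n ≫ g) :
    ∃ k, h =
      biprod.desc (biprod.lift (dC (n + 1)) (u (n + 1))) (biprod.lift 0 (-(dD n))) ≫ k := by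
  obtain ⟨g, hg⟩ := hfac
  have hkill : dC n ≫ (biprod.inl ≫ h + u (n + 1) ≫ g) = 0 := by
    rw [Preadditive.comp_add, ← reassoc_of% hu, ← hg, hh]
  obtain ⟨k, hk⟩ := hC.2 W _ hkill
  refine ⟨biprod.desc k (-g), ?_⟩
  apply biprod.hom_ext'
  · simp [← hk]
  · simp [hg]

theorem isWeakCokernel_coneD_zero (hC : IsWeakCokernel (dC 0) (dC 1))
    (hDalmost : ∀ (X : 𝒞) (f : Dd 0 ⟶ X), (¬ ∃ r : X ⟶ Dd 0, f ≫ r = 𝟙 (Dd 0)) →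
        ∃ g : Dd 1 ⟶ X, f = dD 0 ≫ g)
    (hu : u 0 ≫ dD 0 = dC 0 ≫ u 1) (hu0 : ¬ ∃ g : Cc 1 ⟶ Dd 0, u 0 = dC 0 ≫ g) :
    IsWeakCokernel (coneD Cc Dd dC dD u 0) (coneD Cc Dd dC dD u 1) := by
  change IsWeakCokernel (biprod.lift (dC 0) (u 0))
    (biprod.desc (biprod.lift (dC 1) (u 1)) (biprod.lift 0 (-(dD 0))))
  refine ⟨biprod.hom_ext _ _ (by simp [hC.1]) (by simp [hu]), fun W h hh ↦ ?_⟩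
  rw [biprod_lift_comp_eq] at hh
  exact exists_eq_coneD_succ_comp hC hu h hh
    (hDalmost W _ (not_isSplitMono_of_not_factors hu0 hh))

theorem isWeakCokernel_coneD_succ (n : ℕ) (hC : IsWeakCokernel (dC (n + 1)) (dC (n + 2)))
    (hD : IsWeakCokernel (dD n) (dD (n + 1)))
    (hu : u (n + 1) ≫ dD (n + 1) = dC (n + 1) ≫ u (n + 2)) :
    IsWeakCokernel (coneD Cc Dd dC dD u (n + 1)) (coneD Cc Dd dC dD u (n + 2)) := by
  change IsWeakCokernel
    (biprod.desc (biprod.lift (dC (n + 1)) (u (n + 1))) (biprod.lift 0 (-(dD n))))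
    (biprod.desc (biprod.lift (dC (n + 2)) (u (n + 2))) (biprod.lift 0 (-(dD (n + 1)))))
  refine ⟨?_, fun W h hh ↦ ?_⟩
  · apply biprod.hom_ext' <;> apply biprod.hom_ext <;> simp [hC.1, hD.1, hu]
  have hCpart := biprod.inl ≫= hh
  have hDpart := biprod.inr ≫= hh
  simp only [biprod.inl_desc_assoc, biprod.inr_desc_assoc, biprod_lift_comp_eq,
    comp_zero, zero_comp, Preadditive.neg_comp, zero_add, neg_eq_zero] at hCpart hDpart
  exact exists_eq_coneD_succ_comp hC hu h hCpart (hD.2 W _ hDpart)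

end MappingCone

theorem mapping_cone_left_exact_general
    {𝒞 : Type*} [Category 𝒞] [Preadditive 𝒞] [HasBinaryBiproducts 𝒞]
    (Cc Dd : ℕ → 𝒞)
    (dC : ∀ n, Cc n ⟶ Cc (n + 1)) (dD : ∀ n, Dd n ⟶ Dd (n + 1))
    -- C_• is left 𝒞-exact
    (hCexact : ∀ n, IsWeakCokernel (dC n) (dC (n + 1)))
    -- D_• is left 𝒞-almost split: left 𝒞-exact, …
    (hDexact : ∀ n, IsWeakCokernel (dD n) (dD (n + 1)))
    -- … and every morphism with domain D_0 that is not a split mono factors through d_0^D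
    (hDalmost : ∀ (X : 𝒞) (f : Dd 0 ⟶ X), (¬ ∃ r : X ⟶ Dd 0, f ≫ r = 𝟙 (Dd 0)) →
        ∃ g : Dd 1 ⟶ X, f = dD 0 ≫ g)
    -- u_• is a chain map C_• → D_•
    (u : ∀ n, Cc n ⟶ Dd n)
    (hu : ∀ n, u n ≫ dD n = dC n ≫ u (n + 1))
    -- u_0 does not factor through d_0^C
    (hu0 : ¬ ∃ g : Cc 1 ⟶ Dd 0, u 0 = dC 0 ≫ g) :
    ∀ n, IsWeakCokernel (coneD Cc Dd dC dD u n) (coneD Cc Dd dC dD u (n + 1)) := by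
  rintro (_ | n)
  · exact isWeakCokernel_coneD_zero (hCexact 0) hDalmost (hu 0) hu0
  · exact isWeakCokernel_coneD_succ n (hCexact (n + 1)) (hDexact n) (hu (n + 1))

theorem mapping_cone_left_exact
    {𝒞 : Type*} [Category 𝒞] [Preadditive 𝒞] [HasBinaryBiproducts 𝒞]
    (Cc Dd : ℕ → 𝒞)
    (dC : ∀ n, Cc n ⟶ Cc (n + 1)) (dD : ∀ n, Dd n ⟶ Dd (n + 1))
    -- C_• is left 𝒞-exact
    (hCexact : ∀ n, IsWeakCokernel (dC n) (dC (n + 1)))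
    -- D_• is left 𝒞-almost split: left 𝒞-exact, …
    (hDexact : ∀ n, IsWeakCokernel (dD n) (dD (n + 1)))
    -- … nonsplit, with D_0 indecomposable, …
    (hDnonsplit : ¬ ∃ s : Dd 1 ⟶ Dd 0, dD 0 ≫ s = 𝟙 (Dd 0))
    -- … and every morphism with domain D_0 that is not a split mono factors through d_0^D
    (hDalmost : ∀ (X : 𝒞) (f : Dd 0 ⟶ X), (¬ ∃ r : X ⟶ Dd 0, f ≫ r = 𝟙 (Dd 0)) →
        ∃ g : Dd 1 ⟶ X, f = dD 0 ≫ g)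
    -- u_• is a chain map C_• → D_•
    (u : ∀ n, Cc n ⟶ Dd n)
    (hu : ∀ n, u n ≫ dD n = dC n ≫ u (n + 1))
    -- u_0 does not factor through d_0^C
    (hu0 : ¬ ∃ g : Cc 1 ⟶ Dd 0, u 0 = dC 0 ≫ g) :
    ∀ n, IsWeakCokernel (coneD Cc Dd dC dD u n) (coneD Cc Dd dC dD u (n + 1)) :=
  mapping_cone_left_exact_general Cc Dd dC dD hCexact hDexact hDalmost u hu hu0
end

section
/- Let Q be a finite acyclic quiver without multiple edges and h a dominant quasi-additive function on the repetition quiver with weight ω(h). For a vertex i in the support quiver Q_β of β := ω(h), the weight of h + h_{τ⁻¹x_i} satisfies β − dim I_i^β ≤ ω(h + h_{τ⁻¹x_i}) ≤ β − α_i. Moreover the lower bound is attained (equality) when there is at most one oriented path between any two vertices of Q. -/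
/-!
Statement 17 (Lemma "weight first lemma").  `Q` is a finite acyclic quiver
without multiple edges with vertex set `V`; `succ i` is the set of targets of
the arrows out of `i`.  A dominant quasi-additive function `h` on the
repetition quiver is recorded through the values `c i := h̃(x_i) ≥ 0` and
`d i := h̃(τ⁻¹x_i) ≥ 0` of its defect on the projective section and its
translate (the weight only depends on these).  The weight `ω` is given by the
recursion `a c d i = max(0, c i − d i + Σ_{i→j} a c d j)` (well defined by
acyclicity; here `a` is given together with its recursion).  Adding
`h_{τ⁻¹x_i}` to `h` replaces `d` by `d + δ_i`.  `p k` is the number of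
oriented paths from `k` to `i` in the support quiver `Q_β` of `β := ω(h)`
(the `k`-th coordinate of `dim I_i^β`), and `pfull` is the path-count of `Q`.
Theorem: `β − dim I_i^β ≤ ω(h + h_{τ⁻¹x_i}) ≤ β − α_i` coordinatewise, with
equality on the left when `Q` has at most one oriented path between any two
vertices.
-/

theorem weight_first_lemma
    {V : Type} [Fintype V] [DecidableEq V]
    (succ : V → Finset V)                       -- targets of the arrows out of a vertex
    (a : (V → ℤ) → (V → ℤ) → V → ℤ)             -- the weight recursion
    (ha : ∀ c d i, a c d i = max 0 (c i - d i + ∑ j ∈ succ i, a c d j))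
    (c d : V → ℤ) (hc : ∀ j, 0 ≤ c j) (hd : ∀ j, 0 ≤ d j)   -- h is dominant
    (i : V) (hi : 0 < a c d i)                   -- i belongs to the support quiver Q_β
    (p : V → ℤ)                                  -- paths to i in Q_β, i.e. dim I_i^β
    (hp1 : ∀ k, 0 < a c d k →
        p k = (if k = i then 1 else 0)
          + ∑ j ∈ succ k, (if 0 < a c d j then p j else 0))
    (hp0 : ∀ k, a c d k ≤ 0 → p k = 0)
    (pfull : V → V → ℤ)                          -- path counts in Q
    (hpfull : ∀ k j, pfull k j
        = (if k = j then 1 else 0) + ∑ l ∈ succ k, pfull l j) :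
    (∀ k, a c d k - p k ≤ a c (fun j => d j + if j = i then 1 else 0) k ∧
        a c (fun j => d j + if j = i then 1 else 0) k
          ≤ a c d k - (if k = i then 1 else 0)) ∧
    ((∀ k j, pfull k j ≤ 1) →
        ∀ k, a c (fun j => d j + if j = i then 1 else 0) k = a c d k - p k) := by
  classical
  set d' : V → ℤ := fun j => d j + if j = i then 1 else 0 with hd'def
  have hd'k : ∀ k, d' k = d k + if k = i then 1 else 0 := fun k => rfl
  -- nonnegativity of all values of a
  have anonneg : ∀ c₁ d₁ k, (0:ℤ) ≤ a c₁ d₁ k := by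
    intro c₁ d₁ k; rw [ha]; exact le_max_left _ _
  -- height function from c ≡ 1, d ≡ 0
  set a₀ : V → ℤ := a (fun _ => 1) (fun _ => 0) with ha₀def
  have ha₀ : ∀ k, a₀ k = 1 + ∑ j ∈ succ k, a₀ j := by
    intro k
    have hs : (0:ℤ) ≤ ∑ j ∈ succ k, a₀ j :=
      Finset.sum_nonneg fun j _ => anonneg _ _ j
    have := ha (fun _ => 1) (fun _ => 0) k
    rw [ha₀def] at hs ⊢
    omega
  have hm : ∀ k, ∀ j ∈ succ k, (a₀ j).toNat < (a₀ k).toNat := by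
    intro k j hj
    have h1 : a₀ j ≤ ∑ l ∈ succ k, a₀ l :=
      Finset.single_le_sum (fun l _ => anonneg _ _ l) hj
    have h2 := ha₀ k
    have h3 := anonneg (fun _ => 1) (fun _ => 0) j
    rw [← ha₀def] at h3
    omega
  -- pfull is nonnegative
  have pfnnAux : ∀ n : ℕ, ∀ k, (a₀ k).toNat < n → ∀ j, 0 ≤ pfull k j := by
    intro n
    induction n with
    | zero => intro k hk; omega
    | succ n ih =>
      intro k hk j
      have hs : (0:ℤ) ≤ ∑ l ∈ succ k, pfull l j :=
        Finset.sum_nonneg fun l hl => ih l (by have := hm k l hl; omega) j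
      have h := hpfull k j
      rcases eq_or_ne k j with hkj | hkj
      · rw [if_pos hkj] at h; omega
      · rw [if_neg hkj] at h; omega
  have pfnn : ∀ k j, 0 ≤ pfull k j := fun k j =>
    pfnnAux ((a₀ k).toNat + 1) k (Nat.lt_succ_self _) j
  -- main two-sided bounds
  have main : ∀ n : ℕ, ∀ k, (a₀ k).toNat < n →
      a c d k - p k ≤ a c d' k ∧
      a c d' k ≤ a c d k - (if k = i then 1 else 0) := by
    intro n
    induction n with
    | zero => intro k hk; omega
    | succ n ih =>
      intro k hk
      have ihs : ∀ j ∈ succ k,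
          a c d j - p j ≤ a c d' j ∧
          a c d' j ≤ a c d j - (if j = i then 1 else 0) :=
        fun j hj => ih j (by have := hm k j hj; omega)
      have hsumU : ∑ j ∈ succ k, a c d' j ≤ ∑ j ∈ succ k, a c d j := by
        apply Finset.sum_le_sum
        intro j hj
        have h := (ihs j hj).2
        rcases eq_or_ne j i with hji | hji
        · rw [if_pos hji] at h; omega
        · rw [if_neg hji] at h; omega
      have hAk := ha c d k
      have hA'k := ha c d' k
      constructor
      · -- lower bound
        rcases le_or_gt (a c d k) 0 with h0 | h0
        · have hp := hp0 k h0
          have := anonneg c d' k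
          omega
        · have hpk := hp1 k h0
          have hsumL : ∑ j ∈ succ k, (a c d j - if 0 < a c d j then p j else 0)
              ≤ ∑ j ∈ succ k, a c d' j := by
            apply Finset.sum_le_sum
            intro j hj
            by_cases hja : 0 < a c d j
            · have := (ihs j hj).1
              simp [hja]; omega
            · have h1 := anonneg c d' j
              simp [hja]
              omega
          rw [Finset.sum_sub_distrib] at hsumL
          have hdk := hd'k k
          omega
      · -- upper bound
        have hdk := hd'k k
        by_cases hki : k = i
        · subst hki
          omega
        · simp only [if_neg hki] at hdk ⊢
          omega
  have mainb : ∀ k, a c d k - p k ≤ a c d' k ∧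
      a c d' k ≤ a c d k - (if k = i then 1 else 0) :=
    fun k => main ((a₀ k).toNat + 1) k (Nat.lt_succ_self _)
  refine ⟨mainb, ?_⟩
  -- equality case
  intro hone
  -- p is nonnegative and bounded by pfull · i
  have pbAux : ∀ n : ℕ, ∀ k, (a₀ k).toNat < n → 0 ≤ p k ∧ p k ≤ pfull k i := by
    intro n
    induction n with
    | zero => intro k hk; omega
    | succ n ih =>
      intro k hk
      have hpf := hpfull k i
      rcases le_or_gt (a c d k) 0 with h0 | h0
      · have hp := hp0 k h0
        have := pfnn k i
        omega
      · have hpk := hp1 k h0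
        have hs1 : (0:ℤ) ≤ ∑ j ∈ succ k, (if 0 < a c d j then p j else 0) := by
          apply Finset.sum_nonneg
          intro j hj
          by_cases hja : 0 < a c d j
          · have := (ih j (by have := hm k j hj; omega)).1; simp [hja]; omega
          · simp [hja]
        have hs2 : ∑ j ∈ succ k, (if 0 < a c d j then p j else 0)
            ≤ ∑ j ∈ succ k, pfull j i := by
          apply Finset.sum_le_sum
          intro j hj
          by_cases hja : 0 < a c d j
          · have := (ih j (by have := hm k j hj; omega)).2; simp [hja]; omega
          · have := pfnn j i; simp [hja]; omega
        omega
  have pb : ∀ k, 0 ≤ p k ∧ p k ≤ pfull k i :=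
    fun k => pbAux ((a₀ k).toNat + 1) k (Nat.lt_succ_self _)
  -- upper bound a c d' k ≤ a c d k - p k, by induction
  have eqAux : ∀ n : ℕ, ∀ k, (a₀ k).toNat < n → a c d' k ≤ a c d k - p k := by
    intro n
    induction n with
    | zero => intro k hk; omega
    | succ n ih =>
      intro k hk
      have hAk := ha c d k
      have hA'k := ha c d' k
      have hdk := hd'k k
      rcases le_or_gt (a c d k) 0 with h0 | h0
      · -- a c d k = 0, p k = 0, show a c d' k ≤ 0
        have hp := hp0 k h0
        have hsumU : ∑ j ∈ succ k, a c d' j ≤ ∑ j ∈ succ k, a c d j := by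
          apply Finset.sum_le_sum
          intro j hj
          have h := (mainb j).2
          rcases eq_or_ne j i with hji | hji
          · rw [if_pos hji] at h; omega
          · rw [if_neg hji] at h; omega
        have hik : (0:ℤ) ≤ if k = i then 1 else 0 := by positivity
        have := anonneg c d k
        omega
      · have hpk := hp1 k h0
        have hsum : ∑ j ∈ succ k, a c d' j ≤
            ∑ j ∈ succ k, (a c d j - if 0 < a c d j then p j else 0) := by
          apply Finset.sum_le_sum
          intro j hj
          have hIH := ih j (by have := hm k j hj; omega)
          by_cases hja : 0 < a c d j
          · simp [hja]; omega
          · have hpj := hp0 j (le_of_not_gt hja)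
            simp [hja]; omega
        rw [Finset.sum_sub_distrib] at hsum
        have hb1 := (pb k).1
        have hb2 := (pb k).2
        have hb3 := hone k i
        omega
  intro k
  have h1 := (mainb k).1
  have h2 := eqAux ((a₀ k).toNat + 1) k (Nat.lt_succ_self _)
  omega
end

section
/- Let h be a dominant quasi-additive function on the repetition quiver of a finite acyclic quiver Q without multiple edges, β := ω(h) its weight, and i a sink of the support quiver Q_β. Then ω(h + h_{τ⁻¹x_i} − δ_{x_i}) = β − α_i. -/
/-!
Statement 18 (Lemma "weight second lemma").  `Q` is a finite acyclic quiver
without multiple edges with vertex set `V`; `succ i` the targets of the arrows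
out of `i`.  A dominant quasi-additive function `h` is recorded through the
defect values `c i := h̃(x_i) ≥ 0`, `d i := h̃(τ⁻¹x_i) ≥ 0`, and the weight
`ω(h) = β` is computed by the recursion
`a c d i = max(0, c i − d i + Σ_{i→j} a c d j)`.  The function
`h' := h + h_{τ⁻¹x_i} − δ_{x_i}` has defect values
`c' k = c k − δ_{ik} + [k → i in Q]`, `d' k = d k + [i → k in Q]` (by the
identity `h_{x_i} + h_{τ⁻¹x_i} = δ_{x_i} + Σ_{x_i→y} h_y`).  Since `i` is a
sink of the support quiver `Q_β`, the defect of `h` vanishes at `x_j` and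
`τ⁻¹x_j` for every `j ≠ i` reachable from `i` by an oriented path.
Theorem: `ω(h + h_{τ⁻¹x_i} − δ_{x_i}) = β − α_i`.
-/

theorem weight_second_lemma
    {V : Type} [Fintype V] [DecidableEq V]
    (succ : V → Finset V)                       -- targets of the arrows out of a vertex
    (a : (V → ℤ) → (V → ℤ) → V → ℤ)             -- the weight recursion
    (ha : ∀ c d i, a c d i = max 0 (c i - d i + ∑ j ∈ succ i, a c d j))
    (c d : V → ℤ) (hc : ∀ j, 0 ≤ c j) (hd : ∀ j, 0 ≤ d j)   -- h is dominant
    (i : V)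
    (hsupp : 0 < a c d i)                        -- i belongs to Q_β
    (hsink : ∀ j ∈ succ i, ¬ 0 < a c d j)        -- i is a sink of Q_β
    -- the defect of h vanishes at x_j, τ⁻¹x_j for j ≠ i reachable from i
    (hvan : ∀ j, j ≠ i →
        Relation.ReflTransGen (fun u v => v ∈ succ u) i j → c j = 0 ∧ d j = 0) :
    ∀ k, a (fun j => c j - (if j = i then 1 else 0) + (if i ∈ succ j then 1 else 0))
           (fun j => d j + (if j ∈ succ i then 1 else 0)) k
      = a c d k - (if k = i then 1 else 0) := by

  have hnonneg : ∀ c d k, 0 ≤ a c d k := by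
    intro c d k; rw [ha]; exact le_max_left _ _
  -- the relation "u is a successor of v" is well-founded
  have hmono : ∀ u v : V, u ∈ succ v →
      (a (fun _ => 1) (fun _ => 0) u).toNat < (a (fun _ => 1) (fun _ => 0) v).toNat := by
    intro u v hu
    have h1 := ha (fun _ => 1) (fun _ => 0) v
    have hsum : a (fun _ => 1) (fun _ => 0) u ≤ ∑ j ∈ succ v, a (fun _ => 1) (fun _ => 0) j :=
      Finset.single_le_sum (fun j _ => hnonneg _ _ j) hu
    have h2 : 0 ≤ a (fun _ => 1) (fun _ => 0) u := hnonneg _ _ u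
    omega
  have hwf : WellFounded (fun u v : V => u ∈ succ v) := by
    exact Subrelation.wf (fun {u v} h => hmono u v h)
      (InvImage.wf (fun v => (a (fun _ => 1) (fun _ => 0) v).toNat) Nat.lt_wfRel.wf)
  -- i has no self-loop
  have hii : i ∉ succ i := fun h => hsink i h hsupp
  intro k
  induction k using hwf.induction with
  | _ k IH =>
  have hs : ∑ j ∈ succ k,
        a (fun j => c j - (if j = i then 1 else 0) + (if i ∈ succ j then 1 else 0))
          (fun j => d j + (if j ∈ succ i then 1 else 0)) j
      = (∑ j ∈ succ k, a c d j) - (if i ∈ succ k then 1 else 0) := by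
    rw [Finset.sum_congr rfl (fun j hj => IH j hj), Finset.sum_sub_distrib,
      Finset.sum_ite_eq' (succ k) i (fun _ => (1 : ℤ))]
  rw [ha, ha, hs]
  by_cases hk : k = i
  · subst hk
    rw [ha] at hsupp
    simp only [lt_max_iff, lt_irrefl, false_or] at hsupp
    simp only [if_pos rfl, if_neg hii]
    rw [max_eq_right (by omega), max_eq_right (by omega)]
    ring
  · by_cases hki : k ∈ succ i
    · have h0 : a c d k = 0 := le_antisymm (by simpa using hsink k hki) (hnonneg c d k)
      rw [ha] at h0
      have hX : c k - d k + ∑ j ∈ succ k, a c d j ≤ 0 := by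
        rcases le_or_gt (c k - d k + ∑ j ∈ succ k, a c d j) 0 with h | h
        · exact h
        · rw [max_eq_right h.le] at h0; omega
      simp only [if_neg hk, if_pos hki]
      rw [max_eq_left (by omega), max_eq_left (by omega)]
      ring
    · simp only [if_neg hk, if_neg hki]
      ring_nf
end
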